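/- arXiv:2605.27778 — 6 statements merged into one kernel-verified Lean document; each statement's English description precedes it below -/
import Mathlib

section
/- Let A, B, C, D be four pairwise distinct points in ℝ² such that dist(A,B) = dist(B,C) = dist(C,D) = dist(D,A) = 1. Then B - A = -(D - C). -/
/-!
The reflection through the midpoint of `B D` swaps `B` and `D`, so it maps the intersection of the
two circles of radius `r` about `B` and `D` to itself. In a plane this intersection has at most two
points; `A` and `C` are two of them, and they must be exchanged because the reflection fixes only
the midpoint. Hence the diagonals `A C` and `B D` of the rhombus share their midpoint.
-/

open EuclideanGeometry Module

variable {V P : Type*} [NormedAddCommGroup V] [InnerProductSpace ℝ V] [MetricSpace P]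
  [NormedAddTorsor V P]

theorem midpoint_eq_midpoint_of_dist_eq [FiniteDimensional ℝ V] (hd : finrank ℝ V = 2)
    {A B C D : P} {r : ℝ} (hAC : A ≠ C) (hBD : B ≠ D) (hAB : dist A B = r) (hAD : dist A D = r)
    (hCB : dist C B = r) (hCD : dist C D = r) : midpoint ℝ A C = midpoint ℝ B D := by
  set σ := AffineIsometryEquiv.pointReflection ℝ (midpoint ℝ B D)
  have hσB : ∀ X, dist (σ X) B = dist X D := fun X => by
    rw [← σ.dist_map X D, AffineIsometryEquiv.pointReflection_midpoint_right]
  have hσD : ∀ X, dist (σ X) D = dist X B := fun X => by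
    rw [← σ.dist_map X B, AffineIsometryEquiv.pointReflection_midpoint_left]
  have hσA := eq_of_dist_eq_of_dist_eq_of_finrank_eq_two hd hBD hAC hAB hCB
    ((hσB A).trans hAD) hAD hCD ((hσD A).trans hAB)
  have hσC := eq_of_dist_eq_of_dist_eq_of_finrank_eq_two hd hBD hAC hAB hCB
    ((hσB C).trans hCD) hAD hCD ((hσD C).trans hCB)
  rw [midpoint_eq_iff]
  rcases hσA with hA | hA
  · rcases hσC with hC | hC
    · exact absurd (σ.injective (hC.trans hA.symm)).symm hAC
    · rw [AffineIsometryEquiv.pointReflection_fixed_iff] at hA hC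
      exact absurd (hA.trans hC.symm) hAC
  · exact hA

theorem stmt_1_general (A B C D : EuclideanSpace ℝ (Fin 2))
    (hAC : A ≠ C)
    (hBD : B ≠ D)
    (dAB : dist A B = 1) (dBC : dist B C = 1)
    (dCD : dist C D = 1) (dDA : dist D A = 1) :
    B - A = -(D - C) := by
  have h := midpoint_eq_midpoint_of_dist_eq finrank_euclideanSpace_fin hAC hBD dAB
    (dist_comm A D ▸ dDA) (dist_comm C B ▸ dBC) dCD
  rw [neg_sub]
  exact (midpoint_eq_midpoint_iff_vsub_eq_vsub ℝ).mp h.symm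

theorem stmt_1 (A B C D : EuclideanSpace ℝ (Fin 2))
    (hAB : A ≠ B) (hAC : A ≠ C) (hAD : A ≠ D)
    (hBC : B ≠ C) (hBD : B ≠ D) (hCD : C ≠ D)
    (dAB : dist A B = 1) (dBC : dist B C = 1)
    (dCD : dist C D = 1) (dDA : dist D A = 1) :
    B - A = -(D - C) :=
  stmt_1_general A B C D hAC hBD dAB dBC dCD dDA
end

section
/- The Mycielskian of the 10-cycle C₁₀ admits a unit-distance embedding in ℝ²: there exists a map f from the vertex set of M(C₁₀) to ℝ² such that adjacent vertices of M(C₁₀) are mapped to points at Euclidean distance exactly 1. -/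
open Real

def cycAdj (n : ℕ) (a b : ZMod n) : Prop := a - b = 1 ∨ b - a = 1

/-- Adjacency in the Mycielskian of the `n`-cycle: vertex `none` is the apex `F`,
`some (a, false)` is the copy vertex `a'`, `some (a, true)` is the original cycle vertex `a`. -/
def mycAdj (n : ℕ) (u v : Option (ZMod n × Bool)) : Prop :=
  (∃ a : ZMod n, (u = none ∧ v = some (a, false)) ∨ (u = some (a, false) ∧ v = none)) ∨
  (∃ a b : ZMod n, cycAdj n a b ∧
    ((u = some (a, false) ∧ v = some (b, true)) ∨
     (u = some (a, true) ∧ v = some (b, false)) ∨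
     (u = some (a, true) ∧ v = some (b, true))))

noncomputable def phi : ℝ := (1 + Real.sqrt 5) / 2

lemma cos_key : ∀ x : ℝ, (x = π/5 ∨ x = -(9*π/5)) →
    Real.cos x = (1 + Real.sqrt 5) / 4 := by
  rintro x (rfl|rfl)
  · exact Real.cos_pi_div_five
  · rw [Real.cos_neg, show 9*π/5 = -(π/5) + 2*π by ring, Real.cos_add_two_pi,
      Real.cos_neg, Real.cos_pi_div_five]

lemma cos_theta1 (b : ZMod 10) :
    Real.cos (π * (b+1).val / 5 - π * b.val / 5) = (1 + Real.sqrt 5) / 4 := by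
  have hv : (b+1).val = (b.val + 1) % 10 := by
    have : Fact (1 < 10) := ⟨by norm_num⟩
    rw [ZMod.val_add, ZMod.val_one]
  have hb : b.val < 10 := b.val_lt
  rw [hv]
  set k := b.val with hk
  clear_value k
  interval_cases k <;> (apply cos_key) <;> norm_num <;>
    first | (left; ring1) | (right; ring1)

lemma cos_theta (a b : ZMod 10) (h : cycAdj 10 a b) :
    Real.cos (π * a.val / 5 - π * b.val / 5) = (1 + Real.sqrt 5) / 4 := by
  rcases h with h | h
  · have : a = b + 1 := by rw [← h]; ring
    subst this; exact cos_theta1 b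
  · have : b = a + 1 := by rw [← h]; ring
    subst this
    rw [show π * a.val / 5 - π * (a+1).val / 5
        = -(π * (a+1).val / 5 - π * a.val / 5) by ring, Real.cos_neg]
    exact cos_theta1 a

noncomputable def myR : Option (ZMod 10 × Bool) → ℝ
  | none => 0
  | some (_, false) => 1
  | some (_, true) => phi

noncomputable def myT : Option (ZMod 10 × Bool) → ℝ
  | none => 0
  | some (a, _) => π * a.val / 5

lemma dist_f (x y : EuclideanSpace ℝ (Fin 2)) (r1 r2 α β : ℝ)
    (hx0 : x 0 = r1 * Real.cos α) (hx1 : x 1 = r1 * Real.sin α)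
    (hy0 : y 0 = r2 * Real.cos β) (hy1 : y 1 = r2 * Real.sin β)
    (h : r1^2 + r2^2 - 2*(r1*r2)*Real.cos (α-β) = 1) : dist x y = 1 := by
  have e : (r1*Real.cos α - r2*Real.cos β)^2 + (r1*Real.sin α - r2*Real.sin β)^2 = 1 := by
    linear_combination r1^2 * (Real.sin_sq_add_cos_sq α) + r2^2 * (Real.sin_sq_add_cos_sq β)
      + 2*(r1*r2) * (Real.cos_sub α β) + h
  rw [EuclideanSpace.dist_eq]
  simp only [Fin.sum_univ_two, Real.dist_eq, sq_abs, hx0, hx1, hy0, hy1]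
  rw [e, Real.sqrt_one]

theorem stmt_6 :
    ∃ f : Option (ZMod 10 × Bool) → EuclideanSpace ℝ (Fin 2),
      ∀ u v, mycAdj 10 u v → dist (f u) (f v) = 1 := by
  refine ⟨fun v => WithLp.toLp 2 (![myR v * Real.cos (myT v), myR v * Real.sin (myT v)] : Fin 2 → ℝ), ?_⟩
  have hs : Real.sqrt 5 ^ 2 = 5 := Real.sq_sqrt (by norm_num)
  rintro u v (⟨a, ⟨rfl, rfl⟩ | ⟨rfl, rfl⟩⟩ |
    ⟨a, b, hab, ⟨rfl, rfl⟩ | ⟨rfl, rfl⟩ | ⟨rfl, rfl⟩⟩) <;>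
    refine dist_f _ _ (myR _) (myR _) (myT _) (myT _) rfl rfl rfl rfl ?_ <;>
    simp only [myR, myT]
  · ring
  · ring
  · rw [cos_theta a b hab]; unfold phi; ring
  · rw [cos_theta a b hab]; unfold phi; ring
  · rw [cos_theta a b hab]; unfold phi; nlinarith [hs]
end

section
/- There is no map f from the vertex set of M(C₅) (the Mycielski–Grötzsch graph) to ℝ² such that adjacent vertices map to points at distance 1 and distinct vertices map to distinct points. Hence M(C₅) is not a unit-distance graph realized by an injective embedding in the plane. -/
/-
Put the apex at the origin. The copy vertices `p k` are then unit vectors, and the cycle vertex `j`,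
being at distance one from `p (j - 1) ≠ p (j + 1)` and different from the apex, is the fourth vertex
`p (j - 1) + p (j + 1)` of the rhombus on `0, p (j - 1), p (j + 1)`. The cycle edges then say that the
vectors `p (j - 1) + p (j + 1) - p j - p (j + 2)` have length one. Writing `p k` as the midpoint of
`a k` and `a (k + 1)`, both `a k + a (k + 1)` and `a k - a (k + 1)` have length two, so the `a k` are
nonzero and consecutive ones are orthogonal. But nonzero vectors in the plane cannot form an odd
cycle of orthogonality.
-/

open Module

theorem ZMod.add_five (k : ZMod 5) : k + 5 = k := by
  rw [show (5 : ZMod 5) = 0 from rfl, add_zero]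

section Plane

variable {V : Type*} [NormedAddCommGroup V] [InnerProductSpace ℝ V] [Fact (finrank ℝ V = 2)]

theorem eq_zero_or_eq_add_of_norm_sub_eq {x p q : V} (hpq : p ≠ q) (hnorm : ‖p‖ = ‖q‖)
    (hp : ‖x - p‖ = ‖p‖) (hq : ‖x - q‖ = ‖q‖) : x = 0 ∨ x = p + q := by
  have := FiniteDimensional.of_fact_finrank_eq_two (K := ℝ) (V := V)
  by_cases hsum : p + q = 0
  · obtain rfl : q = -p := eq_neg_of_add_eq_zero_right hsum
    rw [sub_neg_eq_add, norm_neg] at hq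
    have hpar := parallelogram_law_with_norm ℝ x p
    rw [hp, add_comm, hq] at hpar
    have hx : ‖x‖ ^ 2 = 0 := by linarith
    exact .inl (by simpa using hx)
  · refine EuclideanGeometry.eq_of_dist_eq_of_dist_eq_of_finrank_eq_two Fact.out hpq (Ne.symm hsum)
      (dist_zero_left p) ?_ (by rwa [dist_eq_norm]) (dist_zero_left q) ?_ (by rwa [dist_eq_norm])
    · rw [dist_eq_norm, add_sub_cancel_left, hnorm]
    · rw [dist_eq_norm, add_sub_cancel_right, hnorm]

theorem exists_inner_add_one_ne_zero {a : ZMod 5 → V} (ha : ∀ k, a k ≠ 0) :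
    ∃ k, inner ℝ (a k) (a (k + 1)) ≠ 0 := by
  by_contra! horth
  have h20 : a 2 ∈ ℝ ∙ a 0 := Submodule.mem_span_singleton_of_inner_eq_zero_of_inner_eq_zero
    (ha 1) (ha 0) (horth 1) (by rw [real_inner_comm]; exact horth 0)
  have h42 : a 4 ∈ ℝ ∙ a 2 := Submodule.mem_span_singleton_of_inner_eq_zero_of_inner_eq_zero
    (ha 3) (ha 2) (horth 3) (by rw [real_inner_comm]; exact horth 2)
  have h40 : a 4 ∈ ℝ ∙ a 0 := (Submodule.span_singleton_le_iff_mem _ _).mpr h20 h42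
  have h40' : a 4 ∈ (ℝ ∙ a 0)ᗮ := by
    rw [Submodule.mem_orthogonal_singleton_iff_inner_right, real_inner_comm]
    exact horth 4
  exact ha 4 (Submodule.disjoint_def.mp (Submodule.orthogonal_disjoint _) _ h40 h40')

theorem exists_norm_sub_ne_one {p : ZMod 5 → V} (hp : ∀ k, ‖p k‖ = 1) :
    ∃ j, ‖p (j - 1) + p (j + 1) - (p j + p (j + 2))‖ ≠ 1 := by
  by_contra! hu
  set a : ZMod 5 → V := fun k => p k - p (k + 1) + p (k + 2) - p (k + 3) + p (k + 4) with ha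
  have hadd : ∀ k, ‖a k + a (k + 1)‖ = 2 := by
    intro k
    have : a k + a (k + 1) = (2 : ℝ) • p k := by
      norm_num [ha, add_assoc, ZMod.add_five]
      module
    rw [this, norm_smul, hp]
    norm_num
  have hsub : ∀ k, ‖a k - a (k + 1)‖ = 2 := by
    intro k
    have : a k - a (k + 1) =
        (-2 : ℝ) • (p (k + 2 - 1) + p (k + 2 + 1) - (p (k + 2) + p (k + 2 + 2))) := by
      norm_num [ha, add_assoc, add_sub_assoc, ZMod.add_five]
      module
    rw [this, norm_smul, hu]
    norm_num
  have horth : ∀ k, inner ℝ (a k) (a (k + 1)) = 0 := by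
    intro k
    have h₁ := norm_add_sq_real (a k) (a (k + 1))
    have h₂ := norm_sub_sq_real (a k) (a (k + 1))
    rw [hadd] at h₁
    rw [hsub] at h₂
    linarith
  have hnorm : ∀ k, ‖a k‖ ^ 2 + ‖a (k + 1)‖ ^ 2 = 4 := by
    intro k
    have h₁ := norm_add_sq_real (a k) (a (k + 1))
    rw [hadd, horth] at h₁
    linarith
  have hne : ∀ k, a k ≠ 0 := by
    intro k hk
    have e₀ := hnorm k
    have e₁ := hnorm (k + 1)
    have e₂ := hnorm (k + 2)
    have e₃ := hnorm (k + 3)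
    have e₄ := hnorm (k + 4)
    norm_num [add_assoc, ZMod.add_five, hk] at e₀ e₁ e₂ e₃ e₄
    linarith
  obtain ⟨k, hk⟩ := exists_inner_add_one_ne_zero hne
  exact hk (horth k)

end Plane

theorem cycAdj_sub_one {n : ℕ} (a : ZMod n) : cycAdj n a (a - 1) := .inl (sub_sub_cancel a 1)

theorem cycAdj_add_one {n : ℕ} (a : ZMod n) : cycAdj n a (a + 1) := .inr (add_sub_cancel_left a 1)

theorem mycAdj_copy_apex {n : ℕ} (a : ZMod n) : mycAdj n (some (a, false)) none :=
  .inl ⟨a, .inr ⟨rfl, rfl⟩⟩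

theorem mycAdj_orig_copy {n : ℕ} {a b : ZMod n} (h : cycAdj n a b) :
    mycAdj n (some (a, true)) (some (b, false)) :=
  .inr ⟨a, b, h, .inr (.inl ⟨rfl, rfl⟩)⟩

theorem mycAdj_orig_orig {n : ℕ} {a b : ZMod n} (h : cycAdj n a b) :
    mycAdj n (some (a, true)) (some (b, true)) :=
  .inr ⟨a, b, h, .inr (.inr ⟨rfl, rfl⟩)⟩

theorem stmt_9 :
    ¬ ∃ f : Option (ZMod 5 × Bool) → EuclideanSpace ℝ (Fin 2),
      Function.Injective f ∧ ∀ u v, mycAdj 5 u v → dist (f u) (f v) = 1 := by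
  rintro ⟨f, hinj, hf⟩
  have : Fact (finrank ℝ (EuclideanSpace ℝ (Fin 2)) = 2) := ⟨finrank_euclideanSpace_fin⟩
  set p : ZMod 5 → EuclideanSpace ℝ (Fin 2) := fun k => f (some (k, false)) - f none
  set x : ZMod 5 → EuclideanSpace ℝ (Fin 2) := fun j => f (some (j, true)) - f none
  have hp : ∀ k, ‖p k‖ = 1 := fun k => by rw [← dist_eq_norm, hf _ _ (mycAdj_copy_apex k)]
  have hxp : ∀ j k, cycAdj 5 j k → ‖x j - p k‖ = 1 := fun j k hjk => by
    rw [sub_sub_sub_cancel_right, ← dist_eq_norm, hf _ _ (mycAdj_orig_copy hjk)]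
  have hx : ∀ j, x j = p (j - 1) + p (j + 1) := by
    intro j
    refine (eq_zero_or_eq_add_of_norm_sub_eq ?_ ?_ ?_ ?_).resolve_left ?_
    · intro h
      have := hinj (sub_left_injective h)
      simp only [Option.some.injEq, Prod.mk.injEq, and_true] at this
      rw [sub_eq_add_neg, add_right_inj] at this
      exact absurd this (by decide)
    · rw [hp, hp]
    · rw [hp, hxp _ _ (cycAdj_sub_one j)]
    · rw [hp, hxp _ _ (cycAdj_add_one j)]
    · exact sub_ne_zero.mpr (hinj.ne (Option.some_ne_none _))
  obtain ⟨j, hj⟩ := exists_norm_sub_ne_one hp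
  apply hj
  have hxx : ‖x j - x (j + 1)‖ = 1 := by
    rw [sub_sub_sub_cancel_right, ← dist_eq_norm, hf _ _ (mycAdj_orig_orig (cycAdj_add_one j))]
  rwa [hx, hx, add_sub_cancel_right, add_assoc, one_add_one_eq_two] at hxx
end

section
/- Let n ≥ 3, n ≠ 10. There is no injective map f from the vertex set of M(Cₙ) to ℝ² sending adjacent vertices to points at Euclidean distance 1. -/
/- ## Auxiliary plane-geometry lemmas (in coordinates) -/

lemma det_aux (x0 x1 a0 a1 b0 b1 : ℝ) (ha : a0 ≠ 0 ∨ a1 ≠ 0)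
    (hx : x0*a0 + x1*a1 = 0) (hb : b0*a0 + b1*a1 = 0) : x0*b1 - x1*b0 = 0 := by
  rcases ha with h | h
  · have h2 : a0*(x0*b1 - x1*b0) = b1*(x0*a0+x1*a1) - x1*(b0*a0+b1*a1) := by ring
    rw [hx, hb] at h2
    simpa [h] using mul_eq_zero.mp (by linarith : a0*(x0*b1 - x1*b0) = 0)
  · have h2 : a1*(x0*b1 - x1*b0) = x0*(b0*a0 + b1*a1) - b0*(x0*a0 + x1*a1) := by ring
    rw [hx, hb] at h2
    simpa [h] using mul_eq_zero.mp (by linarith : a1*(x0*b1 - x1*b0) = 0)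

lemma lemA (p0 p1 q0 q1 x0 x1 : ℝ) (hp : p0^2+p1^2 = 1) (hq : q0^2+q1^2 = 1)
    (hpq : ¬(p0 = q0 ∧ p1 = q1)) (hx : ¬(x0 = 0 ∧ x1 = 0))
    (h1 : (x0-p0)^2+(x1-p1)^2 = 1) (h2 : (x0-q0)^2+(x1-q1)^2 = 1) :
    x0 = p0 + q0 ∧ x1 = p1 + q1 := by
  have hsp : 2*(x0*p0 + x1*p1) = x0^2 + x1^2 := by linear_combination hp - h1
  have hsq : 2*(x0*q0 + x1*q1) = x0^2 + x1^2 := by linear_combination hq - h2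
  have hxa : x0*(p0-q0) + x1*(p1-q1) = 0 := by linear_combination (hsp - hsq)/2
  have hba : (p0+q0)*(p0-q0) + (p1+q1)*(p1-q1) = 0 := by linear_combination hp - hq
  have ha : p0 - q0 ≠ 0 ∨ p1 - q1 ≠ 0 := by
    by_contra hc
    push_neg at hc
    exact hpq ⟨by linarith [hc.1], by linarith [hc.2]⟩
  have hdet := det_aux x0 x1 (p0-q0) (p1-q1) (p0+q0) (p1+q1) ha hxa hba
  have hdotb : x0*(p0+q0) + x1*(p1+q1) = x0^2+x1^2 := by linear_combination (hsp + hsq)/2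
  have hs : x0^2 + x1^2 ≠ 0 := by
    intro h0
    exact hx ⟨by nlinarith, by nlinarith⟩
  constructor
  · have key : (x0^2+x1^2)*(x0 - (p0+q0)) = 0 := by linear_combination (-x0)*hdotb + x1*hdet
    rcases mul_eq_zero.mp key with h | h
    · exact absurd h hs
    · linarith
  · have key : (x0^2+x1^2)*(x1 - (p1+q1)) = 0 := by linear_combination (-x1)*hdotb - x0*hdet
    rcases mul_eq_zero.mp key with h | h
    · exact absurd h hs
    · linarith

lemma lemA' (o0 o1 p0 p1 q0 q1 x0 x1 : ℝ)
    (hp : (p0-o0)^2+(p1-o1)^2 = 1) (hq : (q0-o0)^2+(q1-o1)^2 = 1)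
    (hpq : ¬(p0 = q0 ∧ p1 = q1)) (hx : ¬(x0 = o0 ∧ x1 = o1))
    (h1 : (x0-p0)^2+(x1-p1)^2 = 1) (h2 : (x0-q0)^2+(x1-q1)^2 = 1) :
    x0 = p0 + q0 - o0 ∧ x1 = p1 + q1 - o1 := by
  have := lemA (p0-o0) (p1-o1) (q0-o0) (q1-o1) (x0-o0) (x1-o1) hp hq
    (fun ⟨e0, e1⟩ => hpq ⟨by linarith, by linarith⟩)
    (fun ⟨e0, e1⟩ => hx ⟨by linarith, by linarith⟩)
    (by linear_combination h1) (by linear_combination h2)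
  exact ⟨by linarith [this.1], by linarith [this.2]⟩

lemma lemB (a0 a1 b0 b1 x0 x1 y0 y1 : ℝ)
    (hxa : (x0-a0)^2+(x1-a1)^2 = 1) (hxb : (x0-b0)^2+(x1-b1)^2 = 1)
    (hya : (y0-a0)^2+(y1-a1)^2 = 1) (hyb : (y0-b0)^2+(y1-b1)^2 = 1)
    (hab : ¬(a0 = b0 ∧ a1 = b1)) (hxy : ¬(x0 = y0 ∧ x1 = y1)) :
    a0 + b0 = x0 + y0 ∧ a1 + b1 = x1 + y1 := by
  have hdv : (a0+b0-x0-y0)*(a0-b0) + (a1+b1-x1-y1)*(a1-b1) = 0 := by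
    linear_combination (hxa - hxb + hya - hyb)/2
  have hdw : (a0+b0-x0-y0)*(x0-y0) + (a1+b1-x1-y1)*(x1-y1) = 0 := by
    linear_combination (hya - hxa + hyb - hxb)/2
  have hwv : (x0-y0)*(a0-b0) + (x1-y1)*(a1-b1) = 0 := by
    linear_combination (hxb - hxa + hya - hyb)/2
  have hv : a0 - b0 ≠ 0 ∨ a1 - b1 ≠ 0 := by
    by_contra hc; push_neg at hc
    exact hab ⟨by linarith [hc.1], by linarith [hc.2]⟩
  have hw : (x0-y0)^2 + (x1-y1)^2 ≠ 0 := by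
    intro h0
    exact hxy ⟨by nlinarith, by nlinarith⟩
  have hdet := det_aux (a0+b0-x0-y0) (a1+b1-x1-y1) (a0-b0) (a1-b1) (x0-y0) (x1-y1) hv hdv hwv
  constructor
  · have key : ((x0-y0)^2+(x1-y1)^2)*(a0+b0-x0-y0) = 0 := by
      linear_combination (x0-y0)*hdw + (x1-y1)*hdet
    rcases mul_eq_zero.mp key with h | h
    · exact absurd h hw
    · linarith
  · have key : ((x0-y0)^2+(x1-y1)^2)*(a1+b1-x1-y1) = 0 := by
      linear_combination (x1-y1)*hdw - (x0-y0)*hdet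
    rcases mul_eq_zero.mp key with h | h
    · exact absurd h hw
    · linarith

/- ## The arithmetic core: a `ZMod n`-indexed sequence in the plane satisfying the
   pentagonal recurrence, with unit values and injective, gives a contradiction. -/

lemma tail_aux (n : ℕ) (hn : 3 ≤ n) (hn10 : n ≠ 10) (v : ZMod n → ℝ × ℝ)
    (hrec : ∀ i, v (i+4) + v (i+2) + v i = v (i+3) + v (i+1))
    (hunit : ∀ i, (v i).1^2 + (v i).2^2 = 1)
    (hinj : ∀ i j : ZMod n, v i = v j → i = j) : False := by
  have h5 : ∀ i, v (i+5) = -v i := by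
    intro i
    have e1 := hrec i
    have e2 := hrec (i+1)
    have r1 : i+1+4 = i+5 := by ring
    have r2 : i+1+2 = i+3 := by ring
    have r3 : i+1+3 = i+4 := by ring
    have r4 : i+1+1 = i+2 := by ring
    rw [r1, r2, r3, r4] at e2
    linear_combination e1 + e2
  have hpow : ∀ (k : ℕ) (i : ZMod n), v (i + ((5*k : ℕ) : ZMod n)) = (-1:ℝ×ℝ)^k * v i := by
    intro k
    induction k with
    | zero => intro i; simp
    | succ k ih =>
      intro i
      have hidx : i + ((5*(k+1) : ℕ) : ZMod n) = (i + 5) + ((5*k : ℕ) : ZMod n) := by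
        push_cast; ring
      rw [hidx, ih (i+5), h5 i]
      ring
  have h2ne : (2 : ZMod n) ≠ 0 := by
    intro h
    have h' : ((2:ℕ) : ZMod n) = 0 := by exact_mod_cast h
    have := (ZMod.natCast_eq_zero_iff 2 n).mp h'
    have := Nat.le_of_dvd (by norm_num) this
    omega
  rcases Nat.even_or_odd n with hev | hodd
  · by_cases h5n : 5 ∣ n
    · -- 10 ∣ n, n ≠ 10 so n ≥ 20
      have h10 : 10 ∣ n := Nat.Coprime.mul_dvd_of_dvd_of_dvd (by norm_num) hev.two_dvd h5n
      have hn20 : 20 ≤ n := by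
        obtain ⟨m, rfl⟩ := h10
        omega
      have := hpow 2 0
      norm_num at this
      have heq := hinj _ _ this
      have : ((10:ℕ) : ZMod n) = 0 := by exact_mod_cast heq
      have := (ZMod.natCast_eq_zero_iff 10 n).mp this
      have := Nat.le_of_dvd (by norm_num) this
      omega
    · -- n even, 5 ∤ n
      obtain ⟨m, rfl⟩ := hev.two_dvd
      have hm2 : 2 ≤ m := by omega
      have hcop : Nat.Coprime 5 m :=
        (Nat.Prime.coprime_iff_not_dvd (by norm_num)).mpr (fun h => h5n (h.mul_left 2))
      have hmpos : 0 < m := by omega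
      have ht1 : 1 ≤ Nat.totient m := Nat.totient_pos.mpr hmpos
      have heuler : 5 ^ Nat.totient m ≡ 1 [MOD m] := Nat.ModEq.pow_totient hcop
      have hmod : 2 * 5 ^ Nat.totient m ≡ 2 * 1 [MOD 2 * m] := Nat.ModEq.mul_left' 2 heuler
      have hkey : ((5 * (2 * 5 ^ (Nat.totient m - 1)) : ℕ) : ZMod (2*m)) = ((2:ℕ) : ZMod (2*m)) := by
        rw [ZMod.natCast_eq_natCast_iff]
        have : 5 * (2 * 5 ^ (Nat.totient m - 1)) = 2 * 5 ^ Nat.totient m := by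
          obtain ⟨t, ht⟩ : ∃ t, Nat.totient m = t + 1 := ⟨_, (Nat.succ_pred_eq_of_pos ht1).symm⟩
          rw [ht]
          simp [Nat.add_sub_cancel]
          ring
        rw [this]
        simpa using hmod
      have := hpow (2 * 5 ^ (Nat.totient m - 1)) 0
      rw [hkey, pow_mul] at this
      norm_num at this
      have heq := hinj _ _ this
      have h2z : ((2:ℕ) : ZMod (2*m)) = 0 := by
        rw [← heq]; push_cast; ring
      exact h2ne (by exact_mod_cast h2z)
  · -- n odd
    have := hpow n 0
    have hz : ((5*n : ℕ) : ZMod n) = 0 := by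
      rw [ZMod.natCast_eq_zero_iff]; exact ⟨5, by ring⟩
    rw [hz, add_zero, Odd.neg_one_pow hodd] at this
    have h1 : (v 0).1 = -(v 0).1 := by
      have := congrArg Prod.fst this; simpa using this
    have h2 : (v 0).2 = -(v 0).2 := by
      have := congrArg Prod.snd this; simpa using this
    have := hunit 0
    nlinarith [h1, h2, this]

/- ## Small helpers about `EuclideanSpace ℝ (Fin 2)` -/

lemma pt_ext (x y : EuclideanSpace ℝ (Fin 2)) (h0 : x 0 = y 0) (h1 : x 1 = y 1) : x = y := by
  ext i
  fin_cases i <;> assumption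

lemma dist_sq (x y : EuclideanSpace ℝ (Fin 2)) (h : dist x y = 1) :
    (x 0 - y 0)^2 + (x 1 - y 1)^2 = 1 := by
  rw [EuclideanSpace.dist_eq] at h
  have h2 : (∑ i, dist (x i) (y i) ^ 2) = 1 := by
    have hnn : (0:ℝ) ≤ ∑ i, dist (x i) (y i) ^ 2 := Finset.sum_nonneg fun i _ => sq_nonneg _
    have := congrArg (fun t => t^2) h
    simp only [Real.sq_sqrt hnn, one_pow] at this
    exact this
  simpa [Fin.sum_univ_two, Real.dist_eq, sq_abs] using h2

theorem stmt_10 (n : ℕ) (hn : 3 ≤ n) (hn10 : n ≠ 10) :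
    ¬ ∃ f : Option (ZMod n × Bool) → EuclideanSpace ℝ (Fin 2),
      Function.Injective f ∧ ∀ u v, mycAdj n u v → dist (f u) (f v) = 1 := by
  rintro ⟨f, hinj, hd⟩
  have h2ne : (2 : ZMod n) ≠ 0 := by
    intro h
    have h' : ((2:ℕ) : ZMod n) = 0 := by exact_mod_cast h
    have := (ZMod.natCast_eq_zero_iff 2 n).mp h'
    have := Nat.le_of_dvd (by norm_num) this
    omega
  -- injectivity in coordinates
  have pt_ne : ∀ p q : ZMod n × Bool, p ≠ q →
      ¬(f (some p) 0 = f (some q) 0 ∧ f (some p) 1 = f (some q) 1) := by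
    rintro p q hpq ⟨h0, h1⟩
    exact hpq (Option.some_injective _ (hinj (pt_ext _ _ h0 h1)))
  have ptF_ne : ∀ p : ZMod n × Bool,
      ¬(f (some p) 0 = f none 0 ∧ f (some p) 1 = f none 1) := by
    rintro p ⟨h0, h1⟩
    exact Option.some_ne_none p (hinj (pt_ext _ _ h0 h1))
  have hdiffne : ∀ (j : ZMod n) (b : Bool), ((j - 1 : ZMod n), b) ≠ ((j + 1 : ZMod n), b) := by
    intro j b h
    have h' : j - 1 = j + 1 := by
      have := congrArg Prod.fst h
      simpa using this
    exact h2ne (by linear_combination -h')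
  -- cycle adjacencies
  have c1 : ∀ j : ZMod n, cycAdj n (j-1) j := fun j => Or.inr (by ring)
  have c2 : ∀ j : ZMod n, cycAdj n (j+1) j := fun j => Or.inl (by ring)
  have c3 : ∀ j : ZMod n, cycAdj n j (j-1) := fun j => Or.inl (by ring)
  have c4 : ∀ j : ZMod n, cycAdj n j (j+1) := fun j => Or.inr (by ring)
  -- distances in coordinates
  have dF : ∀ i : ZMod n,
      (f (some (i,false)) 0 - f none 0)^2 + (f (some (i,false)) 1 - f none 1)^2 = 1 :=
    fun i => dist_sq _ _ (hd _ _ (Or.inl ⟨i, Or.inr ⟨rfl, rfl⟩⟩))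
  have dA'A : ∀ a b : ZMod n, cycAdj n a b →
      (f (some (b,true)) 0 - f (some (a,false)) 0)^2 +
      (f (some (b,true)) 1 - f (some (a,false)) 1)^2 = 1 := by
    intro a b h
    refine dist_sq _ _ ?_
    rw [dist_comm]
    exact hd _ _ (Or.inr ⟨a, b, h, Or.inl ⟨rfl, rfl⟩⟩)
  have dAA : ∀ a b : ZMod n, cycAdj n a b →
      (f (some (a,true)) 0 - f (some (b,true)) 0)^2 +
      (f (some (a,true)) 1 - f (some (b,true)) 1)^2 = 1 :=
    fun a b h => dist_sq _ _ (hd _ _ (Or.inr ⟨a, b, h, Or.inr (Or.inr ⟨rfl, rfl⟩)⟩))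
  -- Step A : each original cycle vertex is determined by its copy-neighbours and the apex
  have keyA : ∀ j : ZMod n,
      f (some (j,true)) 0 = f (some (j-1,false)) 0 + f (some (j+1,false)) 0 - f none 0 ∧
      f (some (j,true)) 1 = f (some (j-1,false)) 1 + f (some (j+1,false)) 1 - f none 1 := by
    intro j
    exact lemA' (f none 0) (f none 1)
      (f (some (j-1,false)) 0) (f (some (j-1,false)) 1)
      (f (some (j+1,false)) 0) (f (some (j+1,false)) 1)
      (f (some (j,true)) 0) (f (some (j,true)) 1)
      (dF (j-1)) (dF (j+1)) (pt_ne _ _ (hdiffne j false)) (ptF_ne _)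
      (dA'A (j-1) j (c1 j)) (dA'A (j+1) j (c2 j))
  -- Step B : rhombus relation
  have keyB : ∀ j : ZMod n,
      f (some (j-1,true)) 0 + f (some (j+1,true)) 0
        = f (some (j,true)) 0 + f (some (j,false)) 0 ∧
      f (some (j-1,true)) 1 + f (some (j+1,true)) 1
        = f (some (j,true)) 1 + f (some (j,false)) 1 := by
    intro j
    exact lemB
      (f (some (j-1,true)) 0) (f (some (j-1,true)) 1)
      (f (some (j+1,true)) 0) (f (some (j+1,true)) 1)
      (f (some (j,true)) 0) (f (some (j,true)) 1)
      (f (some (j,false)) 0) (f (some (j,false)) 1)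
      (dAA j (j-1) (c3 j)) (dAA j (j+1) (c4 j))
      (by linear_combination dA'A j (j-1) (c3 j))
      (by linear_combination dA'A j (j+1) (c4 j))
      (pt_ne _ _ (hdiffne j true))
      (pt_ne _ _ (by simp))
  -- assemble the recurrence and finish with `tail_aux`
  apply tail_aux n hn hn10
    (fun i => (f (some (i,false)) 0 - f none 0, f (some (i,false)) 1 - f none 1))
  · intro i
    have a1 := keyA (i+1)
    have a2 := keyA (i+2)
    have a3 := keyA (i+3)
    have b := keyB (i+2)
    have r1 : i+1-1 = i := by ring
    have r2 : i+1+1 = i+2 := by ring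
    have r3 : i+2-1 = i+1 := by ring
    have r4 : i+2+1 = i+3 := by ring
    have r5 : i+3-1 = i+2 := by ring
    have r6 : i+3+1 = i+4 := by ring
    rw [r1, r2] at a1
    rw [r3, r4] at a2 b
    rw [r5, r6] at a3
    refine Prod.ext ?_ ?_ <;> simp only [Prod.fst_add, Prod.snd_add]
    · linear_combination b.1 - a1.1 - a3.1 + a2.1
    · linear_combination b.2 - a1.2 - a3.2 + a2.2
  · intro i
    simpa using dF i
  · intro i j hv
    have h0 := congrArg Prod.fst hv
    have h1 := congrArg Prod.snd hv
    simp only at h0 h1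
    have e0 : f (some (i,false)) 0 = f (some (j,false)) 0 := by linarith
    have e1 : f (some (i,false)) 1 = f (some (j,false)) 1 := by linarith
    have := hinj (pt_ext _ _ e0 e1)
    have := Option.some_injective _ this
    exact (Prod.mk.injEq _ _ _ _).mp this |>.1
end

section
/- For every integer n ≥ 3, the Mycielskian M(Cₙ) admits a unit-distance embedding in ℝ³: there exists an injective map f from the vertices of M(Cₙ) to ℝ³ such that adjacent vertices are mapped to points at Euclidean distance exactly 1. -/
open Real

-- choice of winding number k
lemma exists_good_k (n : ℕ) (hn : 3 ≤ n) :
    ∃ k : ℕ, Nat.Coprime k n ∧ 1 ≤ k ∧ 2 * k ≤ n ∧ n ≤ 6 * k := by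
  rcases Nat.even_or_odd n with he | ho
  · obtain ⟨m, rfl⟩ := he
    rcases Nat.even_or_odd m with hme | hmo
    · obtain ⟨p, rfl⟩ := hme
      refine ⟨2 * p - 1, ?_, by omega, by omega, by omega⟩
      show Nat.gcd (2 * p - 1) (p + p + (p + p)) = 1
      have h1 := Nat.gcd_dvd_left (2 * p - 1) (p + p + (p + p))
      have h2 := Nat.gcd_dvd_right (2 * p - 1) (p + p + (p + p))
      have he2 : (p + p + (p + p)) - 2 * (2 * p - 1) = 2 := by omega
      have h3 : Nat.gcd (2 * p - 1) (p + p + (p + p)) ∣ 2 := by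
        have h5 := Nat.dvd_sub h2 (h1.mul_left 2); rwa [he2] at h5
      have h4 := Nat.le_of_dvd (by norm_num) h3
      interval_cases h : Nat.gcd (2 * p - 1) (p + p + (p + p)) <;> omega
    · obtain ⟨p, rfl⟩ := hmo
      refine ⟨2 * p - 1, ?_, by omega, by omega, by omega⟩
      show Nat.gcd (2 * p - 1) (2 * p + 1 + (2 * p + 1)) = 1
      have h1 := Nat.gcd_dvd_left (2 * p - 1) (2 * p + 1 + (2 * p + 1))
      have h2 := Nat.gcd_dvd_right (2 * p - 1) (2 * p + 1 + (2 * p + 1))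
      have he2 : (2 * p + 1 + (2 * p + 1)) - 2 * (2 * p - 1) = 4 := by omega
      have h3 : Nat.gcd (2 * p - 1) (2 * p + 1 + (2 * p + 1)) ∣ 4 := by
        have h5 := Nat.dvd_sub h2 (h1.mul_left 2); rwa [he2] at h5
      have h4 := Nat.le_of_dvd (by norm_num) h3
      interval_cases h : Nat.gcd (2 * p - 1) (2 * p + 1 + (2 * p + 1)) <;> omega
  · obtain ⟨m, rfl⟩ := ho
    refine ⟨m, ?_, by omega, by omega, by omega⟩
    show Nat.gcd m (2 * m + 1) = 1
    have h1 := Nat.gcd_dvd_left m (2 * m + 1)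
    have h2 := Nat.gcd_dvd_right m (2 * m + 1)
    have he2 : (2 * m + 1) - 2 * m = 1 := by omega
    have h3 : Nat.gcd m (2 * m + 1) ∣ 1 := by
      have h5 := Nat.dvd_sub h2 (h1.mul_left 2); rwa [he2] at h5
    exact Nat.dvd_one.mp h3

noncomputable def emb3 (x y t : ℝ) : EuclideanSpace ℝ (Fin 3) := WithLp.toLp 2 ![x, y, t]

lemma emb3_dist (x y t x' y' t' : ℝ) :
    dist (emb3 x y t) (emb3 x' y' t') = Real.sqrt ((x - x')^2 + (y - y')^2 + (t - t')^2) := by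
  rw [EuclideanSpace.dist_eq]
  congr 1
  rw [Fin.sum_univ_three]
  simp [emb3, Real.dist_eq, sq_abs]

lemma emb3_inj {x y t x' y' t' : ℝ} (h : emb3 x y t = emb3 x' y' t') :
    x = x' ∧ y = y' ∧ t = t' := by
  refine ⟨congrArg (· 0) h, congrArg (· 1) h, congrArg (· 2) h⟩

lemma circ_dist (a b α β t t' : ℝ) :
    dist (emb3 (a * Real.cos α) (a * Real.sin α) t) (emb3 (b * Real.cos β) (b * Real.sin β) t')
      = Real.sqrt (a^2 + b^2 - 2*a*b*Real.cos (α - β) + (t - t')^2) := by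
  rw [emb3_dist, Real.cos_sub]
  congr 1
  have h1 := Real.sin_sq_add_cos_sq α
  have h2 := Real.sin_sq_add_cos_sq β
  ring_nf
  nlinarith [h1, h2]


lemma val_sub_one {n : ℕ} (hn : 3 ≤ n) {a b : ZMod n} (h : a - b = 1) :
    ∃ m : ℤ, (a.val : ℤ) - b.val = 1 + n * m := by
  haveI : NeZero n := ⟨by omega⟩
  have hd : (n : ℤ) ∣ ((a.val : ℤ) - b.val - 1) := by
    rw [← ZMod.intCast_zmod_eq_zero_iff_dvd]
    push_cast
    rw [ZMod.natCast_val, ZMod.natCast_val, ZMod.cast_id, ZMod.cast_id, h, sub_self]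
  obtain ⟨m, hm⟩ := hd
  exact ⟨m, by linarith⟩

lemma cos_adj {n k : ℕ} (hn : 3 ≤ n) {θ : ℝ} (hθ : (n : ℝ) * θ = 2 * π * k)
    {a b : ZMod n} (h : cycAdj n a b) :
    Real.cos (θ * a.val - θ * b.val) = Real.cos θ := by
  have key : ∀ c d : ZMod n, c - d = 1 → Real.cos (θ * c.val - θ * d.val) = Real.cos θ := by
    intro c d hcd
    obtain ⟨m, hm⟩ := val_sub_one hn hcd
    have hval : (c.val : ℝ) - d.val = 1 + n * m := by exact_mod_cast hm
    have harg : θ * c.val - θ * d.val = θ + (↑(m * k) : ℤ) * (2 * π) := by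
      push_cast
      linear_combination θ * hval + (m : ℝ) * hθ
    rw [harg, Real.cos_add_int_mul_two_pi]
  rcases h with h | h
  · exact key a b h
  · rw [← Real.cos_neg, neg_sub]
    exact key b a h

lemma angle_inj {n k : ℕ} (hn : 3 ≤ n) (hcop : Nat.Coprime k n) {θ : ℝ}
    (hθ : (n : ℝ) * θ = 2 * π * k) {a b : ZMod n}
    (hc : Real.cos (θ * a.val) = Real.cos (θ * b.val))
    (hs : Real.sin (θ * a.val) = Real.sin (θ * b.val)) : a = b := by
  haveI : NeZero n := ⟨by omega⟩
  have he : Complex.exp ((θ * a.val : ℝ) * Complex.I) = Complex.exp ((θ * b.val : ℝ) * Complex.I) := by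
    rw [Complex.exp_mul_I, Complex.exp_mul_I, ← Complex.ofReal_cos, ← Complex.ofReal_cos,
      ← Complex.ofReal_sin, ← Complex.ofReal_sin, hc, hs]
  obtain ⟨m, hm⟩ := Complex.exp_eq_exp_iff_exists_int.mp he
  have hm' : ((θ * a.val : ℝ) : ℂ) = ((θ * b.val : ℝ) : ℂ) + (m : ℂ) * (2 * π) := by
    have h9 : ((θ * a.val : ℝ) : ℂ) * Complex.I
        = (((θ * b.val : ℝ) : ℂ) + (m : ℂ) * (2 * π)) * Complex.I := by
      rw [hm]; ring
    exact mul_right_cancel₀ Complex.I_ne_zero h9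
  have him : θ * (a.val : ℝ) = θ * b.val + m * (2 * π) := by exact_mod_cast hm'
  have h2 : 2 * π * ((k : ℝ) * a.val) = 2 * π * ((k : ℝ) * b.val + m * n) := by
    linear_combination (n : ℝ) * him - ((a.val : ℝ) - b.val) * hθ
  have h3 : (k : ℝ) * a.val = (k : ℝ) * b.val + m * n :=
    mul_left_cancel₀ (by positivity : (2 * π : ℝ) ≠ 0) h2
  have h4 : (k * a.val : ℤ) = k * b.val + m * n := by exact_mod_cast h3
  have h5 : (n : ℤ) ∣ ((a.val : ℤ) - b.val) * k := by
    refine ⟨m, by linarith⟩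
  have h6 : (n : ℤ) ∣ ((a.val : ℤ) - b.val) :=
    (Nat.Coprime.isCoprime (hcop.symm)).dvd_of_dvd_mul_right h5
  have hva := ZMod.val_lt a
  have hvb := ZMod.val_lt b
  have h7 : (a.val : ℤ) - b.val = 0 :=
    Int.eq_zero_of_abs_lt_dvd h6 (by rw [abs_lt]; omega)
  exact ZMod.val_injective n (by omega)

theorem stmt_11 (n : ℕ) (hn : 3 ≤ n) :
    ∃ f : Option (ZMod n × Bool) → EuclideanSpace ℝ (Fin 3),
      Function.Injective f ∧ ∀ u v, mycAdj n u v → dist (f u) (f v) = 1 := by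
  obtain ⟨k, hcop, hk1, hk2, hk6⟩ := exists_good_k n hn
  have hn0 : (0 : ℝ) < n := by exact_mod_cast (by omega : 0 < n)
  have hk2' : (2 : ℝ) * k ≤ n := by exact_mod_cast hk2
  have hk6' : (n : ℝ) ≤ 6 * k := by exact_mod_cast hk6
  set θ : ℝ := 2 * π * k / n with hθdef
  have hθ : (n : ℝ) * θ = 2 * π * k := by
    rw [hθdef]; field_simp
  set s : ℝ := Real.sin (π * k / n) with hsdef
  have hs_half : 1 / 2 ≤ s := by
    rw [hsdef, ← Real.sin_pi_div_six]
    apply Real.sin_le_sin_of_le_of_le_pi_div_two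
    · linarith [Real.pi_pos]
    · rw [div_le_div_iff₀ hn0 (by norm_num : (0:ℝ) < 2)]
      nlinarith [Real.pi_pos]
    · rw [div_le_div_iff₀ (by norm_num : (0:ℝ) < 6) hn0]
      nlinarith [Real.pi_pos]
  have hs0 : 0 < s := by linarith
  have hcosθ : Real.cos θ = 1 - 2 * s ^ 2 := by
    have hrw : θ = 2 * (π * k / n) := by rw [hθdef]; ring
    rw [hrw, Real.cos_two_mul', hsdef]
    linear_combination Real.sin_sq_add_cos_sq (π * k / n)
  have h16 : 1 / (16 * s ^ 2) ≤ 1 / 4 := by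
    rw [div_le_div_iff₀ (by positivity) (by norm_num : (0:ℝ) < 4)]
    nlinarith
  set hh : ℝ := Real.sqrt (1 / 2 - 1 / (16 * s ^ 2)) with hhdef
  set z : ℝ := Real.sqrt (1 - 1 / (16 * s ^ 2)) with hzdef
  have hh2 : hh ^ 2 = 1 / 2 - 1 / (16 * s ^ 2) := Real.sq_sqrt (by linarith)
  have hhpos : 0 < hh := Real.sqrt_pos.mpr (by linarith)
  have hz2 : z ^ 2 = 1 - 1 / (16 * s ^ 2) := Real.sq_sqrt (by linarith)
  have hzpos : 0 < z := Real.sqrt_pos.mpr (by linarith)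
  have hρ0 : (0 : ℝ) < 1 / (4 * s) := by positivity
  have hr0 : (0 : ℝ) < 1 / (2 * s) := by positivity
  refine ⟨fun u => Option.elim u (emb3 (0 * Real.cos 0) (0 * Real.sin 0) (-z))
    (fun p => cond p.2
      (emb3 ((1/(2*s)) * Real.cos (θ * p.1.val)) ((1/(2*s)) * Real.sin (θ * p.1.val)) hh)
      (emb3 ((1/(4*s)) * Real.cos (θ * p.1.val)) ((1/(4*s)) * Real.sin (θ * p.1.val)) 0)), ?_, ?_⟩
  · -- injectivity
    rintro (_ | ⟨a, _ | _⟩) (_ | ⟨b, _ | _⟩) huv <;>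
      simp only [Option.elim, cond_true, cond_false] at huv <;>
      [skip; skip; skip; skip; skip; skip; skip; skip; skip]
    · rfl
    · exact absurd (emb3_inj huv).2.2 (by intro h; linarith)
    · exact absurd (emb3_inj huv).2.2 (by intro h; linarith)
    · exact absurd (emb3_inj huv).2.2 (by intro h; linarith)
    · obtain ⟨h1, h2, -⟩ := emb3_inj huv
      have hc := mul_left_cancel₀ (ne_of_gt hρ0) h1
      have hsin := mul_left_cancel₀ (ne_of_gt hρ0) h2
      rw [angle_inj hn hcop hθ hc hsin]
    · exact absurd (emb3_inj huv).2.2 (by intro h; linarith)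
    · exact absurd (emb3_inj huv).2.2 (by intro h; linarith)
    · exact absurd (emb3_inj huv).2.2 (by intro h; linarith)
    · obtain ⟨h1, h2, -⟩ := emb3_inj huv
      have hc := mul_left_cancel₀ (ne_of_gt hr0) h1
      have hsin := mul_left_cancel₀ (ne_of_gt hr0) h2
      rw [angle_inj hn hcop hθ hc hsin]
  · -- distances
    have e1 : ((1:ℝ)/(4*s))^2 = 1/(16*s^2) := by field_simp; ring
    rintro u v (⟨a, ⟨rfl, rfl⟩ | ⟨rfl, rfl⟩⟩ | ⟨a, b, hab, ⟨rfl, rfl⟩ | ⟨rfl, rfl⟩ | ⟨rfl, rfl⟩⟩) <;>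
      simp only [Option.elim, cond_true, cond_false] <;> rw [circ_dist]
    · rw [Real.sqrt_eq_one]
      linear_combination e1 + hz2
    · rw [Real.sqrt_eq_one]
      linear_combination e1 + hz2
    · rw [cos_adj hn hθ hab, hcosθ, Real.sqrt_eq_one]
      have h01 : ((0:ℝ) - hh)^2 = 1/2 - 1/(16*s^2) := by linear_combination hh2
      rw [h01]; field_simp; ring
    · rw [cos_adj hn hθ hab, hcosθ, Real.sqrt_eq_one]
      have h01 : (hh - 0)^2 = 1/2 - 1/(16*s^2) := by linear_combination hh2
      rw [h01]; field_simp; ring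
    · rw [cos_adj hn hθ hab, hcosθ, Real.sqrt_eq_one]
      field_simp; ring
end

section
/- Suppose k ≥ 3 and points A_1,…,A_k, B_1,…,B_k in ℝ² are pairwise distinct, with dist(A_j, B_j) = 1 for all j, dist(A_j, A_{j+1}) = dist(B_j, B_{j+1}) = 1 for 1 ≤ j ≤ k-1, and dist(A_1, B_k) = dist(A_k, B_1) = 1. Then a contradiction follows: the unit vector B_1 - A_1 would have to equal its own negation. -/
lemma aux_real_16 (p1 p2 q1 q2 r1 r2 s1 s2 : ℝ)
    (h1 : (p1 - q1)^2 + (p2 - q2)^2 = 1)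
    (h2 : (q1 - r1)^2 + (q2 - r2)^2 = 1)
    (h3 : (r1 - s1)^2 + (r2 - s2)^2 = 1)
    (h4 : (s1 - p1)^2 + (s2 - p2)^2 = 1)
    (ha : (q1 - s1)^2 + (q2 - s2)^2 ≠ 0)
    (hb : (r1 - p1)^2 + (r2 - p2)^2 ≠ 0) :
    p1 + r1 = q1 + s1 ∧ p2 + r2 = q2 + s2 := by
  have hab : (q1 - s1) * (r1 - p1) + (q2 - s2) * (r2 - p2) = 0 := by
    linear_combination (h1 - h2 + h3 - h4) / 2
  have hav : (q1 - s1) * (q1 + s1 - p1 - r1) + (q2 - s2) * (q2 + s2 - p2 - r2) = 0 := by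
    linear_combination (h1 + h2 - h3 - h4) / 2
  have hbv : (r1 - p1) * (q1 + s1 - p1 - r1) + (r2 - p2) * (q2 + s2 - p2 - r2) = 0 := by
    linear_combination (h1 - h2 - h3 + h4) / 2
  set det := (q1 - s1) * (r2 - p2) - (q2 - s2) * (r1 - p1) with hdet_def
  have hdetsq : det ^ 2 = ((q1 - s1)^2 + (q2 - s2)^2) * ((r1 - p1)^2 + (r2 - p2)^2) := by
    linear_combination (-(q1 - s1) * (r1 - p1) - (q2 - s2) * (r2 - p2)) * hab
  have hdet : det ≠ 0 := by
    intro h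
    rw [h] at hdetsq
    exact (mul_ne_zero ha hb) (by linarith [hdetsq])
  have hv1 : det * (q1 + s1 - p1 - r1) = 0 := by
    linear_combination (r2 - p2) * hav - (q2 - s2) * hbv
  have hv2 : det * (q2 + s2 - p2 - r2) = 0 := by
    linear_combination (q1 - s1) * hbv - (r1 - p1) * hav
  have e1 := (mul_eq_zero.mp hv1).resolve_left hdet
  have e2 := (mul_eq_zero.mp hv2).resolve_left hdet
  constructor <;> linarith

lemma dist_sq_coords_16 (P Q : EuclideanSpace ℝ (Fin 2)) (h : dist P Q = 1) :
    (P 0 - Q 0)^2 + (P 1 - Q 1)^2 = 1 := by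
  rw [EuclideanSpace.dist_eq, Real.sqrt_eq_one] at h
  simpa [Fin.sum_univ_two, Real.dist_eq, sq_abs] using h

lemma ne_coords_16 (P Q : EuclideanSpace ℝ (Fin 2)) (h : P ≠ Q) :
    (P 0 - Q 0)^2 + (P 1 - Q 1)^2 ≠ 0 := by
  intro h0
  apply h
  have h1 : P 0 - Q 0 = 0 ∧ P 1 - Q 1 = 0 := by
    constructor <;> nlinarith [sq_nonneg (P 0 - Q 0), sq_nonneg (P 1 - Q 1)]
  refine PiLp.ext (fun i => ?_)
  fin_cases i
  · exact sub_eq_zero.mp h1.1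
  · exact sub_eq_zero.mp h1.2

/-- A quadrilateral in the plane with four unit sides and distinct opposite
vertices is a rhombus: the diagonals bisect each other. -/
lemma rhombus_16 (P Q R S : EuclideanSpace ℝ (Fin 2))
    (h1 : dist P Q = 1) (h2 : dist Q R = 1) (h3 : dist R S = 1) (h4 : dist S P = 1)
    (hQS : Q ≠ S) (hPR : P ≠ R) : P + R = Q + S := by
  obtain ⟨e1, e2⟩ := aux_real_16 (P 0) (P 1) (Q 0) (Q 1) (R 0) (R 1) (S 0) (S 1)
    (dist_sq_coords_16 P Q h1) (dist_sq_coords_16 Q R h2)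
    (dist_sq_coords_16 R S h3) (dist_sq_coords_16 S P h4)
    (ne_coords_16 Q S hQS) (ne_coords_16 R P (Ne.symm hPR))
  refine PiLp.ext (fun i => ?_)
  fin_cases i
  · exact e1
  · exact e2

theorem stmt_16 (k : ℕ) (hk : 3 ≤ k)
    (A B : ℕ → EuclideanSpace ℝ (Fin 2))
    (hdistinct : ∀ i j, 1 ≤ i → i ≤ k → 1 ≤ j → j ≤ k →
      (i ≠ j → A i ≠ A j ∧ B i ≠ B j) ∧ A i ≠ B j)
    (hrung : ∀ j, 1 ≤ j → j ≤ k → dist (A j) (B j) = 1)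
    (hA : ∀ j, 1 ≤ j → j ≤ k - 1 → dist (A j) (A (j + 1)) = 1)
    (hB : ∀ j, 1 ≤ j → j ≤ k - 1 → dist (B j) (B (j + 1)) = 1)
    (htwist₁ : dist (A 1) (B k) = 1)
    (htwist₂ : dist (A k) (B 1) = 1) : False := by
  -- Along the ladder, each quadrilateral A_j B_j B_{j+1} A_{j+1} is a unit
  -- rhombus, so the rung vector B_j - A_j is constant.
  have key : ∀ j, 1 ≤ j → j ≤ k → B j - A j = B 1 - A 1 := by
    intro j
    induction j with
    | zero => omega
    | succ n ih =>
      intro h1n hnk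
      rcases Nat.eq_or_lt_of_le h1n with h | h
      · rw [← h]
      · have hn1 : 1 ≤ n := by omega
        have hnk1 : n ≤ k - 1 := by omega
        have hnk' : n ≤ k := by omega
        have hr := rhombus_16 (A n) (B n) (B (n + 1)) (A (n + 1))
          (hrung n hn1 hnk') (hB n hn1 hnk1)
          ((dist_comm (B (n+1)) (A (n+1))).trans (hrung (n+1) (by omega) hnk))
          ((dist_comm (A (n+1)) (A n)).trans (hA n hn1 hnk1))
          (((hdistinct (n+1) n (by omega) hnk hn1 hnk').2).symm)
          ((hdistinct n (n+1) hn1 hnk' (by omega) hnk).2)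
        -- hr : A n + A (n+1) = B n + B (n+1)
        have step : B (n + 1) - A (n + 1) = B n - A n := by
          have := hr
          rw [sub_eq_sub_iff_add_eq_add]
          linear_combination (norm := abel) this
        rw [step]
        exact ih hn1 hnk'
  have hkey := key k (by omega) le_rfl
  -- The twist quadrilateral A_k B_k A_1 B_1 is also a unit rhombus.
  have hd := hdistinct k 1 (by omega) le_rfl (by omega) (by omega)
  have hne := (hd.1 (by omega))
  have hr := rhombus_16 (A k) (B k) (A 1) (B 1)
    (hrung k (by omega) le_rfl)
    ((dist_comm (B k) (A 1)).trans htwist₁)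
    (hrung 1 (by omega) (by omega))
    ((dist_comm (B 1) (A k)).trans htwist₂)
    hne.2 hne.1
  -- hr : A k + A 1 = B k + B 1, hkey : B k - A k = B 1 - A 1
  have e3 : A 1 - B 1 = B 1 - A 1 := by
    rw [← hkey, sub_eq_sub_iff_add_eq_add]
    linear_combination (norm := abel) hr
  have e4 : A 1 = B 1 := by
    have h' : (A 1 - B 1) + (A 1 - B 1) = 0 := by
      nth_rewrite 2 [e3]; abel
    have h2 : (2 : ℝ) • (A 1 - B 1) = 0 := by rw [two_smul]; exact h'
    exact sub_eq_zero.mp ((smul_eq_zero.mp h2).resolve_left (by norm_num))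
  exact (hdistinct 1 1 le_rfl (by omega) le_rfl (by omega)).2 e4
end
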